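/- Let d ≥ 3, G = Isom(ℝ^d), and let μ be a Borel probability measure on G with ∫_G v(g) dμ(g) = 0 and C := ∫_G |v(g)|² dμ(g) < ∞. Then for every x ∈ ℝ^d, ‖T_x 1 − 1‖₂ ≤ 4π² C |x|², where 1 denotes the constant function 1 on SO(d); consequently ‖T_x² 1 − 1‖₂ ≤ 8π² C |x|². -/

import Mathlib

/-!
Expanding `e(y) = 1 - 2πiy + O((2πy)²)` with `y = ⟨ωx, v(g)⟩`, the first-order term integrates to
`⟨ωx, ∫ v dμ⟩ = 0`, so `|T_x 1(ω) - 1| ≤ 4π² ∫ ⟨ωx, v⟩² dμ ≤ 4π² C |x|²` for every `ω`, since `ω`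
is an isometry; as `SO(d)` has total mass one, the same bound holds in `L²`. For the second
estimate write `T_x(T_x 1) - 1 = T_x(T_x 1 - 1) + (T_x 1 - 1)` and use that `T_x` does not increase
the sup norm.
-/

open MeasureTheory Matrix NNReal ENNReal Filter Topology

noncomputable section

/-- The special orthogonal group `SO(d)`, realized as the group of `d × d` real orthogonal
matrices of determinant one. -/
abbrev SOd (d : ℕ) : Type := ↥(Matrix.specialOrthogonalGroup (Fin d) ℝ)

/-- Euclidean space `ℝ^d`. -/
abbrev Ed (d : ℕ) : Type := EuclideanSpace ℝ (Fin d)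

instance (d : ℕ) : Group (SOd d) :=
  { (inferInstance : Monoid (SOd d)) with
    inv := fun A => ⟨star A.1, by
      obtain ⟨A, hA⟩ := A
      rw [Matrix.mem_specialOrthogonalGroup_iff] at hA ⊢
      refine ⟨Unitary.star_mem hA.1, ?_⟩
      rw [Matrix.star_eq_conjTranspose, Matrix.det_conjTranspose, hA.2]
      simp⟩
    inv_mul_cancel := fun A => Subtype.ext A.2.1.1 }

/-- The natural (linear, isometric) action of `SO(d)` on `ℝ^d` by matrix-vector
multiplication. -/
def SOd.act {d : ℕ} (θ : SOd d) (x : Ed d) : Ed d := WithLp.toLp 2 (θ.1.mulVec (WithLp.ofLp x))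

theorem SOd.act_add {d : ℕ} (θ : SOd d) (x y : Ed d) :
    θ.act (x + y) = θ.act x + θ.act y := by
  simp [SOd.act, Matrix.mulVec_add]

theorem SOd.act_mul {d : ℕ} (θ₁ θ₂ : SOd d) (x : Ed d) :
    (θ₁ * θ₂).act x = θ₁.act (θ₂.act x) := by
  simp [SOd.act, Matrix.mulVec_mulVec]

theorem SOd.one_act {d : ℕ} (x : Ed d) : (1 : SOd d).act x = x := by
  simp [SOd.act]

theorem SOd.act_zero {d : ℕ} (θ : SOd d) : θ.act 0 = 0 := by
  simp [SOd.act]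

instance (d : ℕ) : MeasurableSpace (SOd d) := borel _
instance (d : ℕ) : BorelSpace (SOd d) := ⟨rfl⟩

/-- The group `Isom(ℝ^d) = ℝ^d ⋊ SO(d)` of orientation-preserving isometries of `ℝ^d`,
where `(v₁,θ₁)·(v₂,θ₂) = (v₁ + θ₁ v₂, θ₁ θ₂)`. -/
def IsomRd (d : ℕ) : Type := Ed d × SOd d

namespace IsomRd

variable {d : ℕ}

/-- The translation part `v(g)` of an isometry `g = (v(g), θ(g))`. -/
def v (g : IsomRd d) : Ed d := g.1

/-- The rotation part `θ(g)` of an isometry `g = (v(g), θ(g))`; i.e. the quotient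
homomorphism `θ : Isom(ℝ^d) → SO(d)`. -/
def rot (g : IsomRd d) : SOd d := g.2

instance : One (IsomRd d) := ⟨((0 : Ed d), (1 : SOd d))⟩
instance : Mul (IsomRd d) := ⟨fun g h => (g.1 + g.2.act h.1, g.2 * h.2)⟩
instance : Inv (IsomRd d) := ⟨fun g => (-(g.2⁻¹.act g.1), g.2⁻¹)⟩

instance : Group (IsomRd d) where
  mul_assoc g h k := by
    show (_, _) = (_, _)
    rw [Prod.mk.injEq]
    constructor
    · show g.1 + g.2.act h.1 + (g.2 * h.2).act k.1 = g.1 + g.2.act (h.1 + h.2.act k.1)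
      rw [SOd.act_add, SOd.act_mul, add_assoc]
    · exact mul_assoc _ _ _
  one_mul g := by
    show ((0 : Ed d) + (1 : SOd d).act g.1, 1 * g.2) = g
    rw [SOd.one_act, zero_add, one_mul]
    rfl
  mul_one g := by
    show (g.1 + g.2.act 0, g.2 * 1) = g
    rw [SOd.act_zero, add_zero, mul_one]
    rfl
  inv_mul_cancel g := by
    show (-(g.2⁻¹.act g.1) + g.2⁻¹.act g.1, g.2⁻¹ * g.2) = ((0 : Ed d), (1 : SOd d))
    rw [neg_add_cancel, inv_mul_cancel]

instance : TopologicalSpace (IsomRd d) := inferInstanceAs (TopologicalSpace (Ed d × SOd d))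
instance : MeasurableSpace (IsomRd d) := borel _
instance : BorelSpace (IsomRd d) := ⟨rfl⟩

/-- The natural isometric action of `Isom(ℝ^d)` on `ℝ^d`: `g(x) = v(g) + θ(g)x`. -/
def isomAct (g : IsomRd d) (x : Ed d) : Ed d := g.v + g.rot.act x

end IsomRd

/-- `e(y) = e^{-2πiy}`. -/
def eChar (y : ℝ) : ℂ := Complex.exp (-(2 * Real.pi * y) * Complex.I)

/-- The unitary representation `π_x : Isom(ℝ^d) → U(L²(SO(d)))` given by
`(π_x(g)φ)(ω) = e(⟨ωx, v(g)⟩)·φ(θ(g)⁻¹ω)`, applied to a function `φ` on `SO(d)`. -/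
def piRep {d : ℕ} (x : Ed d) (g : IsomRd d) (φ : SOd d → ℂ) : SOd d → ℂ :=
  fun ω => eChar (inner ℝ (SOd.act ω x) (IsomRd.v g) : ℝ) * φ ((IsomRd.rot g)⁻¹ * ω)

/-- The averaging operator `T_x = π_x(μ) = ∫_G π_x(g) dμ(g)` on `L²(SO(d))`, i.e.
`(T_x φ)(ω) = ∫_G e(⟨ωx, v(g)⟩)·φ(θ(g)⁻¹ω) dμ(g)`. -/
def Tav {d : ℕ} (μ : Measure (IsomRd d)) (x : Ed d) (φ : SOd d → ℂ) : SOd d → ℂ :=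
  fun ω => ∫ g, piRep x g φ ω ∂μ

/-- The operator norm `‖T_x‖` of `T_x = π_x(μ)` on `L²(SO(d), mSO)`, as the supremum of
`‖T_x φ‖₂` over unit vectors `φ ∈ L²(SO(d))`. -/
def TavNorm {d : ℕ} (μ : Measure (IsomRd d)) (mSO : Measure (SOd d)) (x : Ed d) : ℝ≥0∞ :=
  ⨆ (φ : SOd d → ℂ) (_ : MemLp φ 2 mSO ∧ eLpNorm φ 2 mSO = 1), eLpNorm (Tav μ x φ) 2 mSO

/-- A measure `μ` on a group is symmetric if it is invariant under `g ↦ g⁻¹`. -/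
def MeasureIsSymmetric {G : Type} [Group G] [MeasurableSpace G] (μ : Measure G) : Prop :=
  Measure.map (fun g => g⁻¹) μ = μ

section Centered

open Complex

variable {Ω : Type*} [MeasurableSpace Ω] {P : Measure Ω} [IsProbabilityMeasure P] {Y : Ω → ℝ}

theorem norm_exp_I_mul_ofReal_sub_one_sub_le (t : ℝ) : ‖exp (I * t) - 1 - I * t‖ ≤ t ^ 2 := by
  have hderiv (u : ℝ) :
      HasDerivAt (fun u : ℝ => exp (I * u) - I * u) (I * (exp (I * u) - 1)) u := by
    have := ((hasDerivAt_id (u : ℂ)).const_mul I).cexp.sub ((hasDerivAt_id (u : ℂ)).const_mul I)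
    simpa [mul_sub, mul_comm] using this.comp_ofReal
  have hbound : ∀ u ∈ Set.uIcc 0 t, ‖I * (exp (I * u) - 1)‖ ≤ |t| := fun u hu => by
    rw [norm_mul, norm_I, one_mul]
    simpa using Real.norm_exp_I_mul_ofReal_sub_one_le.trans (Set.abs_sub_left_of_mem_uIcc hu)
  have := (convex_uIcc 0 t).norm_image_sub_le_of_norm_hasDerivWithin_le
    (fun u _ => (hderiv u).hasDerivWithinAt) hbound Set.left_mem_uIcc Set.right_mem_uIcc
  simpa [sub_right_comm, sq_abs, sq] using this

theorem norm_integral_exp_I_mul_sub_one_le (hY : MemLp Y 2 P) (hmean : ∫ ω, Y ω ∂P = 0) :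
    ‖∫ ω, exp (I * Y ω) ∂P - 1‖ ≤ ∫ ω, Y ω ^ 2 ∂P := by
  have hexp : Integrable (fun ω => exp (I * Y ω)) P :=
    (integrable_const (1 : ℝ)).mono'
      ((by fun_prop : Continuous fun y : ℝ => exp (I * y)).comp_aestronglyMeasurable hY.1)
      (ae_of_all _ fun ω => by simp [norm_exp])
  have hlin : Integrable (fun ω => I * Y ω) P := (hY.integrable one_le_two).ofReal.const_mul I
  have hremainder : ∫ ω, exp (I * Y ω) ∂P - 1 = ∫ ω, (exp (I * Y ω) - 1 - I * Y ω) ∂P := by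
    have hexp_sub_one : Integrable (fun ω => exp (I * Y ω) - 1) P := hexp.sub (integrable_const 1)
    rw [integral_sub hexp_sub_one hlin, integral_sub hexp (integrable_const 1),
      integral_const_mul, integral_complex_ofReal, hmean]
    simp
  rw [hremainder]
  exact (norm_integral_le_integral_norm _).trans (integral_mono_of_nonneg
    (ae_of_all _ fun _ => norm_nonneg _) hY.integrable_sq
    (ae_of_all _ fun ω => norm_exp_I_mul_ofReal_sub_one_sub_le (Y ω)))

theorem norm_integral_eChar_sub_one_le (hY : MemLp Y 2 P) (hmean : ∫ ω, Y ω ∂P = 0) :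
    ‖∫ ω, eChar (Y ω) ∂P - 1‖ ≤ 4 * Real.pi ^ 2 * ∫ ω, Y ω ^ 2 ∂P := by
  have heChar (y : ℝ) : eChar y = exp (I * ↑(-(2 * Real.pi) * y)) := by
    simp only [eChar]; push_cast; ring_nf
  have hsq (ω : Ω) : (-(2 * Real.pi) * Y ω) ^ 2 = 4 * Real.pi ^ 2 * Y ω ^ 2 := by ring
  simpa only [heChar, hsq, integral_const_mul, hmean, mul_zero] using
    norm_integral_exp_I_mul_sub_one_le (hY.const_mul (-(2 * Real.pi)))
      (by rw [integral_const_mul, hmean, mul_zero])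

end Centered

instance Matrix.secondCountableTopology {m n R : Type*} [Countable m] [Countable n]
    [TopologicalSpace R] [SecondCountableTopology R] : SecondCountableTopology (Matrix m n R) :=
  inferInstanceAs (SecondCountableTopology (m → n → R))

instance (d : ℕ) : FirstCountableTopology (SOd d) :=
  Topology.IsInducing.subtypeVal.firstCountableTopology

namespace SOd

variable {d : ℕ}

theorem norm_act (θ : SOd d) (y : Ed d) : ‖θ.act y‖ = ‖y‖ := by
  have hθ : Matrix.toEuclideanCLM (𝕜 := ℝ) θ.1 ∈ unitary (Ed d →L[ℝ] Ed d) :=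
    Unitary.map_mem _ θ.2.1
  exact ContinuousLinearMap.norm_map_of_mem_unitary hθ y

theorem continuous_act_const (x : Ed d) : Continuous fun θ : SOd d => θ.act x :=
  (PiLp.continuous_toLp 2 _).comp (continuous_subtype_val.matrix_mulVec continuous_const)

theorem continuous_inv : Continuous fun θ : SOd d => θ⁻¹ :=
  continuous_induced_rng.2 (continuous_star.comp continuous_subtype_val)

end SOd

namespace IsomRd

variable {d : ℕ}

theorem continuous_v : Continuous (v (d := d)) := continuous_fst

theorem continuous_rot : Continuous (rot (d := d)) := continuous_snd

end IsomRd

theorem continuous_eChar : Continuous eChar := by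
  unfold eChar
  fun_prop

theorem norm_eChar (y : ℝ) : ‖eChar y‖ = 1 := by
  simp [eChar, Complex.norm_exp]

section Averaging

variable {d : ℕ} (μ : Measure (IsomRd d)) (x : Ed d)

theorem norm_piRep (g : IsomRd d) (φ : SOd d → ℂ) (ω : SOd d) :
    ‖piRep x g φ ω‖ = ‖φ ((IsomRd.rot g)⁻¹ * ω)‖ := by
  simp [piRep, norm_eChar]

theorem continuous_piRep {φ : SOd d → ℂ} (hφ : Continuous φ) :
    Continuous fun p : IsomRd d × SOd d => piRep x p.1 φ p.2 :=
  (continuous_eChar.comp (((SOd.continuous_act_const x).comp continuous_snd).inner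
    (IsomRd.continuous_v.comp continuous_fst))).mul
    (hφ.comp ((SOd.continuous_inv.comp (IsomRd.continuous_rot.comp continuous_fst)).mul
      continuous_snd))

theorem integrable_piRep [IsFiniteMeasure μ] {φ : SOd d → ℂ} {B : ℝ} (hφ : Continuous φ)
    (hB : ∀ σ, ‖φ σ‖ ≤ B) (ω : SOd d) : Integrable (fun g => piRep x g φ ω) μ :=
  (integrable_const B).mono' ((continuous_piRep x hφ).comp
    (continuous_id.prodMk continuous_const)).aestronglyMeasurable
    (ae_of_all _ fun g => (norm_piRep x g φ ω).trans_le (hB _))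

theorem Tav_add {φ ψ : SOd d → ℂ} {ω : SOd d} (hφ : Integrable (fun g => piRep x g φ ω) μ)
    (hψ : Integrable (fun g => piRep x g ψ ω) μ) :
    Tav μ x (φ + ψ) ω = Tav μ x φ ω + Tav μ x ψ ω := by
  simp only [Tav, piRep, Pi.add_apply, mul_add]
  exact integral_add hφ hψ

theorem norm_Tav_le [IsProbabilityMeasure μ] {φ : SOd d → ℂ} {B : ℝ} (hB : ∀ σ, ‖φ σ‖ ≤ B)
    (ω : SOd d) : ‖Tav μ x φ ω‖ ≤ B := by
  simpa [Tav] using norm_integral_le_of_norm_le_const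
    (μ := μ) (ae_of_all _ fun g => (norm_piRep x g φ ω).trans_le (hB _))

theorem continuous_Tav [IsFiniteMeasure μ] {φ : SOd d → ℂ} {B : ℝ} (hφ : Continuous φ)
    (hB : ∀ σ, ‖φ σ‖ ≤ B) : Continuous (Tav μ x φ) := by
  have hslice (g : IsomRd d) : Continuous fun ω : SOd d => piRep x g φ ω := by
    have hg : Continuous fun ω : SOd d => ((g, ω) : IsomRd d × SOd d) := .prodMk_right g
    -- elaborated without the expected type, which would trigger a costly unfolding of `piRep`
    exact ((continuous_piRep x hφ).comp hg :)
  exact continuous_of_dominated (fun ω => (integrable_piRep μ x hφ hB ω).aestronglyMeasurable)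
    (fun ω => ae_of_all _ fun g => (norm_piRep x g φ ω).trans_le (hB _)) (integrable_const B)
    (ae_of_all _ hslice)

theorem norm_Tav_sub_one_le [IsProbabilityMeasure μ] {φ : SOd d → ℂ} {B : ℝ}
    (hφ : Continuous φ) (hB : ∀ σ, ‖φ σ - 1‖ ≤ B) (ω : SOd d) :
    ‖Tav μ x φ ω - 1‖ ≤ B + ‖Tav μ x (fun _ => 1) ω - 1‖ := by
  have hsplit : Tav μ x φ ω = Tav μ x (φ - fun _ => 1) ω + Tav μ x (fun _ => 1) ω := by
    rw [← Tav_add μ x (integrable_piRep μ x (hφ.sub continuous_const) hB ω)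
      (integrable_piRep μ x continuous_const (fun _ => norm_one.le) ω), sub_add_cancel]
  calc ‖Tav μ x φ ω - 1‖
      = ‖Tav μ x (φ - fun _ => 1) ω + (Tav μ x (fun _ => 1) ω - 1)‖ := by
        rw [hsplit, add_sub_assoc]
    _ ≤ B + ‖Tav μ x (fun _ => 1) ω - 1‖ :=
        (norm_add_le _ _).trans (add_le_add (norm_Tav_le μ x hB ω) le_rfl)

theorem norm_Tav_one_sub_one_le [IsProbabilityMeasure μ] (hv : MemLp IsomRd.v 2 μ)
    (hmean : ∫ g, IsomRd.v g ∂μ = 0) (ω : SOd d) :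
    ‖Tav μ x (fun _ => 1) ω - 1‖ ≤ 4 * Real.pi ^ 2 * (∫ g, ‖IsomRd.v g‖ ^ 2 ∂μ) * ‖x‖ ^ 2 := by
  set Y : IsomRd d → ℝ := fun g => inner ℝ (ω.act x) (IsomRd.v g)
  have hY : MemLp Y 2 μ := hv.const_inner _
  have hYmean : ∫ g, Y g ∂μ = 0 := by
    rw [integral_inner (hv.integrable one_le_two), hmean, inner_zero_right]
  have hY2 : ∫ g, Y g ^ 2 ∂μ ≤ ∫ g, ‖IsomRd.v g‖ ^ 2 * ‖x‖ ^ 2 ∂μ := by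
    refine integral_mono hY.integrable_sq (hv.integrable_norm_pow two_ne_zero |>.mul_const _)
      fun g => ?_
    rw [← mul_pow, ← sq_abs, mul_comm, ← ω.norm_act x]
    exact pow_le_pow_left₀ (abs_nonneg _) (abs_real_inner_le_norm _ _) 2
  calc ‖Tav μ x (fun _ => 1) ω - 1‖ = ‖∫ g, eChar (Y g) ∂μ - 1‖ := by simp [Tav, piRep, Y]
    _ ≤ 4 * Real.pi ^ 2 * ∫ g, Y g ^ 2 ∂μ := norm_integral_eChar_sub_one_le hY hYmean
    _ ≤ 4 * Real.pi ^ 2 * ∫ g, ‖IsomRd.v g‖ ^ 2 * ‖x‖ ^ 2 ∂μ :=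
        mul_le_mul_of_nonneg_left hY2 (by positivity)
    _ = 4 * Real.pi ^ 2 * (∫ g, ‖IsomRd.v g‖ ^ 2 ∂μ) * ‖x‖ ^ 2 := by
        rw [integral_mul_const]
        ring

end Averaging

theorem eLpNorm_le_ofReal_of_forall_norm_le {α E : Type*} [MeasurableSpace α] {P : Measure α}
    [IsProbabilityMeasure P] [NormedAddCommGroup E] {f : α → E} {p : ℝ≥0∞} {B : ℝ}
    (hB : ∀ a, ‖f a‖ ≤ B) : eLpNorm f p P ≤ ENNReal.ofReal B := by
  simpa using eLpNorm_le_of_ae_bound (p := p) (μ := P) (ae_of_all _ hB)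

theorem Tav_one_estimate_general
    (d : ℕ)
    (mSO : Measure (SOd d)) [IsProbabilityMeasure mSO]
    (μ : Measure (IsomRd d)) [IsProbabilityMeasure μ]
    (hmean : (∫ g, IsomRd.v g ∂μ) = 0)
    (hC : Integrable (fun g => ‖IsomRd.v g‖ ^ 2) μ)
    (x : Ed d) :
    eLpNorm (fun ω => Tav μ x (fun _ => 1) ω - 1) 2 mSO ≤
      ENNReal.ofReal (4 * Real.pi ^ 2 * (∫ g, ‖IsomRd.v g‖ ^ 2 ∂μ) * ‖x‖ ^ 2) ∧
    eLpNorm (fun ω => Tav μ x (Tav μ x (fun _ => 1)) ω - 1) 2 mSO ≤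
      ENNReal.ofReal (8 * Real.pi ^ 2 * (∫ g, ‖IsomRd.v g‖ ^ 2 ∂μ) * ‖x‖ ^ 2) := by
  have hv : MemLp IsomRd.v 2 μ :=
    (memLp_two_iff_integrable_sq_norm IsomRd.continuous_v.aestronglyMeasurable).2 hC
  have hfirst := norm_Tav_one_sub_one_le μ x hv hmean
  have hcont : Continuous (Tav μ x (fun _ => 1)) :=
    continuous_Tav μ x continuous_const (fun _ => norm_one.le)
  refine ⟨eLpNorm_le_ofReal_of_forall_norm_le hfirst,
    eLpNorm_le_ofReal_of_forall_norm_le fun ω => ?_⟩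
  calc _ ≤ _ := norm_Tav_sub_one_le μ x hcont hfirst ω
    _ ≤ _ := add_le_add le_rfl (hfirst ω)
    _ = _ := by ring

/-- **Action of `T_x` on the constant function `1`.**
Let `d ≥ 3`, `G = Isom(ℝ^d)` and let `μ` be a Borel probability measure on `G` with
`∫_G v(g) dμ(g) = 0` and `C := ∫_G |v(g)|² dμ(g) < ∞`.  Then `‖T_x 1 - 1‖₂ ≤ 4π² C |x|²`
for every `x ∈ ℝ^d`, and consequently `‖T_x² 1 - 1‖₂ ≤ 8π² C |x|²`. -/
theorem Tav_one_estimate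
    (d : ℕ) (hd : 3 ≤ d)
    (mSO : Measure (SOd d)) [mSO.IsHaarMeasure] [IsProbabilityMeasure mSO]
    (μ : Measure (IsomRd d)) [IsProbabilityMeasure μ]
    (hmean : (∫ g, IsomRd.v g ∂μ) = 0)
    (hC : Integrable (fun g => ‖IsomRd.v g‖ ^ 2) μ)
    (x : Ed d) :
    eLpNorm (fun ω => Tav μ x (fun _ => 1) ω - 1) 2 mSO ≤
      ENNReal.ofReal (4 * Real.pi ^ 2 * (∫ g, ‖IsomRd.v g‖ ^ 2 ∂μ) * ‖x‖ ^ 2) ∧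
    eLpNorm (fun ω => Tav μ x (Tav μ x (fun _ => 1)) ω - 1) 2 mSO ≤
      ENNReal.ofReal (8 * Real.pi ^ 2 * (∫ g, ‖IsomRd.v g‖ ^ 2 ∂μ) * ‖x‖ ^ 2) :=
  Tav_one_estimate_general d mSO μ hmean hC x
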